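/- Let (R,m) be a Noetherian local ring, N a finitely generated R-module, and k ≥ -1 an integer. If x_1,...,x_r ∈ m is an N-sequence in dimension > k (i.e., for each i, x_i avoids every associated prime p of N/(x_1,...,x_{i-1})N with dim(R/p) > k), then for any positive integers n_1,...,n_r, the sequence x_1^{n_1},...,x_r^{n_r} is also an N-sequence in dimension > k. -/

import Mathlib

open CategoryTheory Opposite IsLocalRing

/-- Interpretation of an integer `k ≥ -1` in `WithBot ℕ∞`, for comparison with Krull dimensions. -/
noncomputable def zdim (k : ℤ) : WithBot (WithTop ℕ) :=
  if k < 0 then ⊥ else ((k.toNat : WithTop ℕ) : WithBot (WithTop ℕ))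

/-- The ideal generated by the first `j` entries of the sequence `x`. -/
def prefIdeal {R : Type} [CommRing R] {r : ℕ} (x : Fin r → R) (j : ℕ) : Ideal R :=
  Ideal.span (x '' {i | (i : ℕ) < j})

/-- `x` is an `N`-sequence in dimension `> k`: for each `i`, `x i` avoids every associated
prime `p` of `N/(x_0,…,x_{i-1})N` with `dim(R/p) > k`. -/
def IsSeqInDimGT (R : Type) [CommRing R] (N : Type) [AddCommGroup N] [Module R N]
    (k : ℤ) {r : ℕ} (x : Fin r → R) : Prop :=
  ∀ i : Fin r, ∀ p ∈ associatedPrimes R (N ⧸ (prefIdeal x (i : ℕ) • ⊤ : Submodule R N)),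
    zdim k < ringKrullDim (R ⧸ p) → x i ∉ p

/-- `depth_k(I,N)`: the common length of maximal `N`-sequences in dimension `> k`
contained in `I` (realized as the supremum of lengths of such sequences). -/
noncomputable def depthK (R : Type) [CommRing R] (k : ℤ) (I : Ideal R)
    (N : Type) [AddCommGroup N] [Module R N] : ℕ∞ :=
  sSup {n : ℕ∞ | ∃ (r : ℕ) (x : Fin r → R),
    (∀ i, x i ∈ I) ∧ IsSeqInDimGT R N k x ∧ n = (r : ℕ∞)}

/-- The set of prime (or arbitrary) ideals `p` with `dim(R/p) ≥ k`. -/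
def dimGE (R : Type) [CommRing R] (k : ℤ) : Set (Ideal R) :=
  {p | zdim k ≤ ringKrullDim (R ⧸ p)}

/-!
Fix an associated prime `p` of `N/(x₁^{n₁},…,x_{i-1}^{n_{i-1}})N` with `dim R/p > k`. Every
associated prime `q ⊆ p` of `N/(x₁,…,x_{j-1})N` has `dim R/q ≥ dim R/p > k`, so the hypothesis
says that `x₁,…,x_r` is a weakly regular sequence on the localization `N_p`. Powers of a weakly
regular sequence are weakly regular: by induction on the exponent, `M/a^{c+1}M` sits in the middle
of `0 → M/a^cM → M/a^{c+1}M → M/aM → 0` (multiplication by `a`, then projection), and a weakly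
regular sequence on the outer terms is one on the middle term, since regularity passes to the middle
of a short exact sequence and the sequence stays exact modulo a regular element of its right end.
Hence `x_i^{n_i}` is a nonzerodivisor on `(N/(x₁^{n₁},…,x_{i-1}^{n_{i-1}})N)_p`, which has the
associated prime `pR_p`, so `x_i^{n_i} ∉ p`.
-/

section UpToTorsion

open Submodule
open scoped Pointwise

variable {R : Type*} [CommRing R] (S : Submonoid R)

/-- With `S = R ∖ p` this says that `x` is a nonzerodivisor on `M_p`; working up to `S`-torsion
avoids localizing the quotients of `M`. -/
def IsSMulRegularUpTo (M : Type*) [AddCommGroup M] [Module R M] (x : R) : Prop :=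
  ∀ m : M, x • m = 0 → ∃ s ∈ S, s • m = 0

variable {S} {M A B C : Type*} [AddCommGroup M] [Module R M] [AddCommGroup A] [Module R A]
  [AddCommGroup B] [Module R B] [AddCommGroup C] [Module R C]

namespace IsSMulRegularUpTo

theorem pow {x : R} (h : IsSMulRegularUpTo S M x) (c : ℕ) : IsSMulRegularUpTo S M (x ^ c) := by
  induction c with
  | zero => exact fun m hm => ⟨1, S.one_mem, by simpa using hm⟩
  | succ c ih =>
    intro m hm
    rw [pow_succ, mul_smul] at hm
    obtain ⟨s, hs, hsm⟩ := ih (x • m) hm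
    obtain ⟨t, ht, htm⟩ := h (s • m) (by rwa [smul_comm])
    exact ⟨t * s, S.mul_mem ht hs, by rwa [mul_smul]⟩

theorem notMem_of_mem_associatedPrimes {p : Ideal R} [p.IsPrime] {x : R}
    (h : IsSMulRegularUpTo p.primeCompl M x) (hp : p ∈ associatedPrimes R M) : x ∉ p := by
  obtain ⟨-, m, rfl⟩ := hp
  intro hx
  obtain ⟨e, he⟩ := Ideal.mem_radical_iff.mp hx
  obtain ⟨s, hs, hsm⟩ := h.pow e m (by simpa [mem_colon_singleton] using he)
  exact hs (Ideal.le_radical (by simpa [mem_colon_singleton] using hsm))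

theorem of_exact {f : A →ₗ[R] B} {g : B →ₗ[R] C} (hf : ∀ a, f a = 0 → ∃ s ∈ S, s • a = 0)
    (hfg : Function.Exact f g) {x : R} (hA : IsSMulRegularUpTo S A x)
    (hC : IsSMulRegularUpTo S C x) : IsSMulRegularUpTo S B x := by
  intro b hb
  obtain ⟨s₁, hs₁, hgb⟩ := hC (g b) (by rw [← map_smul, hb, map_zero])
  obtain ⟨a, ha⟩ := (hfg (s₁ • b)).mp (by rw [map_smul, hgb])
  obtain ⟨s₂, hs₂, hxa⟩ := hf (x • a) (by rw [map_smul, ha, smul_comm, hb, smul_zero])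
  obtain ⟨s₃, hs₃, hsa⟩ := hA (s₂ • a) (by rwa [smul_comm])
  refine ⟨s₃ * s₂ * s₁, S.mul_mem (S.mul_mem hs₃ hs₂) hs₁, ?_⟩
  rw [mul_smul, ← ha, ← map_smul, mul_smul, hsa, map_zero]

end IsSMulRegularUpTo

theorem IsSMulRegularUpTo.of_linearEquiv (e : A ≃ₗ[R] B) {x : R}
    (h : IsSMulRegularUpTo S A x) : IsSMulRegularUpTo S B x := by
  intro b hb
  obtain ⟨s, hs, hsb⟩ := h (e.symm b) (by rw [← map_smul, hb, map_zero])
  exact ⟨s, hs, by simpa using congrArg e hsb⟩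

theorem LinearEquiv.isSMulRegularUpTo_congr (e : A ≃ₗ[R] B) (x : R) :
    IsSMulRegularUpTo S A x ↔ IsSMulRegularUpTo S B x :=
  ⟨.of_linearEquiv e, .of_linearEquiv e.symm⟩

theorem exists_exact_quotSMulTop_pow_succ {a : R} (ha : IsSMulRegularUpTo S M a) (c : ℕ) :
    ∃ (f : QuotSMulTop (a ^ c) M →ₗ[R] QuotSMulTop (a ^ (c + 1)) M)
      (g : QuotSMulTop (a ^ (c + 1)) M →ₗ[R] QuotSMulTop a M),
      (∀ m, f m = 0 → ∃ s ∈ S, s • m = 0) ∧ Function.Exact f g ∧ Function.Surjective g := by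
  have mem_smul_top {r : R} {m : M} : m ∈ r • (⊤ : Submodule R M) ↔ ∃ b, r • b = m := by
    simp only [mem_smul_pointwise_iff_exists, mem_top, true_and]
  have hf : a ^ c • ⊤ ≤ (a ^ (c + 1) • ⊤ : Submodule R M).comap (LinearMap.lsmul R M a) := by
    intro m hm
    obtain ⟨b, rfl⟩ := mem_smul_top.mp hm
    exact mem_smul_top.mpr ⟨b, by rw [LinearMap.lsmul_apply, smul_smul, pow_succ']⟩
  have hg : (a ^ (c + 1) • ⊤ : Submodule R M) ≤ a • ⊤ := by
    intro m hm
    obtain ⟨b, rfl⟩ := mem_smul_top.mp hm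
    exact mem_smul_top.mpr ⟨a ^ c • b, by rw [smul_smul, pow_succ']⟩
  refine ⟨mapQ _ _ _ hf, factor hg, fun m hm => ?_, fun m => ?_, factor_surjective hg⟩
  · obtain ⟨m, rfl⟩ := Submodule.Quotient.mk_surjective _ m
    obtain ⟨b, hb⟩ := mem_smul_top.mp ((Quotient.mk_eq_zero _).mp hm)
    obtain ⟨s, hs, hsm⟩ := ha (m - a ^ c • b) (by
      rw [smul_sub, smul_smul, ← pow_succ', hb, LinearMap.lsmul_apply, sub_self])
    refine ⟨s, hs, ?_⟩
    rw [← Quotient.mk_smul, Quotient.mk_eq_zero, mem_smul_top]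
    rw [smul_sub, sub_eq_zero] at hsm
    exact ⟨s • b, by rw [hsm, smul_comm]⟩
  · obtain ⟨m, rfl⟩ := mkQ_surjective _ m
    rw [factor_mk, mkQ_apply, Quotient.mk_eq_zero]
    constructor
    · intro hm
      obtain ⟨b, rfl⟩ := mem_smul_top.mp hm
      exact ⟨mkQ _ b, rfl⟩
    · rintro ⟨b, hb⟩
      obtain ⟨b, rfl⟩ := mkQ_surjective _ b
      have hab : a • b - m ∈ (a • ⊤ : Submodule R M) := hg ((Submodule.Quotient.eq _).mp hb)
      simpa using sub_mem (smul_mem_pointwise_smul b a ⊤ mem_top) hab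

theorem QuotSMulTop.exists_smul_eq_zero_of_map_eq_zero {f : A →ₗ[R] B} {g : B →ₗ[R] C}
    (hf : ∀ a, f a = 0 → ∃ s ∈ S, s • a = 0) (hfg : Function.Exact f g) {x : R}
    (hC : IsSMulRegularUpTo S C x) (a : QuotSMulTop x A) (ha : QuotSMulTop.map x f a = 0) :
    ∃ s ∈ S, s • a = 0 := by
  obtain ⟨a, rfl⟩ := mkQ_surjective _ a
  rw [mkQ_apply, QuotSMulTop.map_apply_mk, Quotient.mk_eq_zero,
    mem_smul_pointwise_iff_exists] at ha
  obtain ⟨b, -, hb⟩ := ha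
  obtain ⟨s₁, hs₁, hgb⟩ := hC (g b) (by rw [← map_smul, hb, hfg.apply_apply_eq_zero])
  obtain ⟨a', ha'⟩ := (hfg (s₁ • b)).mp (by rw [map_smul, hgb])
  obtain ⟨s₂, hs₂, hsa⟩ := hf (s₁ • a - x • a') (by
    rw [map_sub, map_smul, map_smul, ← hb, ha', smul_comm, sub_self])
  refine ⟨s₂ * s₁, S.mul_mem hs₂ hs₁, ?_⟩
  rw [smul_sub, sub_eq_zero, smul_comm s₂ x] at hsa
  rw [← map_smul, mkQ_apply, Quotient.mk_eq_zero, mul_smul, hsa]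
  exact smul_mem_pointwise_smul _ _ _ mem_top

variable (S) in
def IsWeaklyRegularUpTo : (M : Type*) → [AddCommGroup M] → [Module R M] → {r : ℕ} →
    (Fin r → R) → Prop
  | _, _, _, 0, _ => True
  | M, _, _, _ + 1, x =>
    IsSMulRegularUpTo S M (x 0) ∧ IsWeaklyRegularUpTo (QuotSMulTop (x 0) M) (Fin.tail x)

namespace IsWeaklyRegularUpTo

theorem of_exact {r : ℕ} (x : Fin r → R) {f : A →ₗ[R] B} {g : B →ₗ[R] C}
    (hf : ∀ a, f a = 0 → ∃ s ∈ S, s • a = 0) (hfg : Function.Exact f g)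
    (hg : Function.Surjective g) (hA : IsWeaklyRegularUpTo S A x)
    (hC : IsWeaklyRegularUpTo S C x) : IsWeaklyRegularUpTo S B x := by
  induction r generalizing A B C with
  | zero => trivial
  | succ r ih =>
    exact ⟨hA.1.of_exact hf hfg hC.1, ih (Fin.tail x)
      (QuotSMulTop.exists_smul_eq_zero_of_map_eq_zero hf hfg hC.1)
      (QuotSMulTop.map_exact _ hfg hg) (QuotSMulTop.map_surjective _ hg) hA.2 hC.2⟩

theorem quotSMulTop_pow {r : ℕ} {x : Fin r → R} {a : R} (ha : IsSMulRegularUpTo S M a)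
    (hx : IsWeaklyRegularUpTo S (QuotSMulTop a M) x) {c : ℕ} (hc : 0 < c) :
    IsWeaklyRegularUpTo S (QuotSMulTop (a ^ c) M) x := by
  induction c, hc using Nat.le_induction with
  | base => rwa [pow_one]
  | succ c _ ih =>
    obtain ⟨f, g, hf, hfg, hg⟩ := exists_exact_quotSMulTop_pow_succ ha c
    exact of_exact x hf hfg hg ih hx

theorem pow {r : ℕ} {x : Fin r → R} (hx : IsWeaklyRegularUpTo S M x) (n : Fin r → ℕ)
    (hn : ∀ i, 0 < n i) : IsWeaklyRegularUpTo S M (fun i => x i ^ n i) := by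
  induction r generalizing M with
  | zero => trivial
  | succ r ih =>
    exact ⟨hx.1.pow (n 0),
      ih (hx.2.quotSMulTop_pow hx.1 (hn 0)) (Fin.tail n) (fun i => hn i.succ)⟩

end IsWeaklyRegularUpTo

open Module.associatedPrimes in
theorem isSMulRegularUpTo_primeCompl_of_forall_notMem [IsNoetherianRing R] {p : Ideal R}
    [p.IsPrime] {x : R} (h : ∀ q ∈ associatedPrimes R M, q ≤ p → x ∉ q) :
    IsSMulRegularUpTo p.primeCompl M x := by
  -- Otherwise `x` kills a nonzero element of `M_p`, so it lies in an associated prime of `M_p`,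
  -- and that prime contracts to an associated prime of `M` contained in `p`.
  intro m hm
  by_contra! hm'
  let f := LocalizedModule.mkLinearMap p.primeCompl M
  have hfm : f m ≠ 0 := fun h0 => by
    obtain ⟨s, hs⟩ := (IsLocalizedModule.eq_zero_iff p.primeCompl f).mp h0
    exact hm' s s.2 hs
  have hzd : algebraMap R (Localization.AtPrime p) x ∈
      {r | ∃ y : LocalizedModule p.primeCompl M, y ≠ 0 ∧ r • y = 0} :=
    ⟨f m, hfm, by rw [algebraMap_smul, ← map_smul, hm, map_zero]⟩
  rw [← biUnion_associatedPrimes_eq_zero_divisors] at hzd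
  obtain ⟨Q, hQ, hxQ⟩ := Set.mem_iUnion₂.mp hzd
  refine h _ (comap_mem_associatedPrimes_of_mem_associatedPrimes_of_isLocalizedModule_of_fg
    p.primeCompl f Q hQ (IsNoetherian.noetherian _)) ?_ hxQ
  calc Q.comap _ ≤ (maximalIdeal _).comap _ :=
        Ideal.comap_mono (le_maximalIdeal hQ.isPrime.ne_top)
    _ = p := Localization.AtPrime.under_maximalIdeal

end UpToTorsion

section PrefIdeal

open Submodule
open scoped Pointwise

variable {R : Type} [CommRing R] {S : Submonoid R} {M : Type*} [AddCommGroup M] [Module R M]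

theorem prefIdeal_zero {r : ℕ} (x : Fin r → R) : prefIdeal x 0 = ⊥ := by
  simp [prefIdeal]

theorem prefIdeal_succ {r : ℕ} (x : Fin (r + 1) → R) (j : ℕ) :
    prefIdeal x (j + 1) = Ideal.span {x 0} ⊔ prefIdeal (Fin.tail x) j := by
  rw [prefIdeal, prefIdeal, ← Ideal.span_union]
  congr 1
  ext z
  simp [Fin.exists_fin_succ, Fin.tail, eq_comm]

def quotPrefIdealSuccEquiv {r : ℕ} (x : Fin (r + 1) → R) (j : ℕ) :
    (M ⧸ (prefIdeal x (j + 1) • ⊤ : Submodule R M)) ≃ₗ[R]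
      QuotSMulTop (x 0) M ⧸
        (prefIdeal (Fin.tail x) j • ⊤ : Submodule R (QuotSMulTop (x 0) M)) :=
  quotEquivOfEq _ _ (by rw [prefIdeal_succ, sup_smul, ideal_span_singleton_smul]) ≪≫ₗ
    (quotientQuotientEquivQuotientSup (x 0 • ⊤) (prefIdeal (Fin.tail x) j • ⊤)).symm ≪≫ₗ
      quotEquivOfEq _ _ (by rw [map_smul'', Submodule.map_top, range_mkQ])

theorem isWeaklyRegularUpTo_iff_forall_prefIdeal {r : ℕ} (x : Fin r → R) :
    IsWeaklyRegularUpTo S M x ↔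
      ∀ i : Fin r, IsSMulRegularUpTo S (M ⧸ (prefIdeal x i • ⊤ : Submodule R M)) (x i) := by
  induction r generalizing M with
  | zero => exact ⟨fun _ i => i.elim0, fun _ => trivial⟩
  | succ r ih =>
    rw [Fin.forall_fin_succ]
    refine and_congr ?_ ((ih (Fin.tail x)).trans (forall_congr' fun j => ?_))
    · exact (LinearEquiv.isSMulRegularUpTo_congr (quotEquivOfEqBot _ (by
        rw [Fin.val_zero, prefIdeal_zero, bot_smul])) _).symm
    · exact (LinearEquiv.isSMulRegularUpTo_congr (quotPrefIdealSuccEquiv x j) _).symm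

end PrefIdeal

theorem powers_of_seq_in_dim_gt_general (R : Type) [CommRing R] [IsNoetherianRing R]
    (N : Type) [AddCommGroup N] [Module R N]
    (k : ℤ) (r : ℕ) (x : Fin r → R)
    (hx : IsSeqInDimGT R N k x)
    (n : Fin r → ℕ) (hn : ∀ i, 0 < n i) :
    IsSeqInDimGT R N k (fun i => x i ^ n i) := by
  intro i p hp hdim hxp
  have := hp.isPrime
  have hreg : IsWeaklyRegularUpTo p.primeCompl N x :=
    (isWeaklyRegularUpTo_iff_forall_prefIdeal x).mpr fun j =>
      isSMulRegularUpTo_primeCompl_of_forall_notMem fun q hq hqp => hx j q hq <| hdim.trans_le <|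
        ringKrullDim_le_of_surjective _ (Ideal.Quotient.factor_surjective hqp)
  have hpow := (isWeaklyRegularUpTo_iff_forall_prefIdeal _).mp (hreg.pow n hn) i
  exact hpow.notMem_of_mem_associatedPrimes hp hxp

/-- If `x₁,…,x_r ∈ m` is an `N`-sequence in dimension `> k`, then so is
`x₁^{n₁},…,x_r^{n_r}` for any positive integers `n₁,…,n_r`. -/
theorem powers_of_seq_in_dim_gt (R : Type) [CommRing R] [IsNoetherianRing R] [IsLocalRing R]
    (N : Type) [AddCommGroup N] [Module R N] [Module.Finite R N]
    (k : ℤ) (hk : -1 ≤ k) (r : ℕ) (x : Fin r → R)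
    (hxm : ∀ i, x i ∈ maximalIdeal R)
    (hx : IsSeqInDimGT R N k x)
    (n : Fin r → ℕ) (hn : ∀ i, 0 < n i) :
    IsSeqInDimGT R N k (fun i => x i ^ n i) :=
  powers_of_seq_in_dim_gt_general R N k r x hx n hn
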